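/- arXiv:1102.1924 — 7 statements merged into one kernel-verified Lean document; each statement's English description precedes it below -/
import Mathlib

section
/- The n-dimensional Lebesgue volume of the region G_n = {y ∈ ℝⁿ : y₁ > 0 and |y|ⁿ < (2n-4)y₁²} equals (π^{(n-1)/2}/n) · (2n-4)^{n/(n-2)} · Γ(1/2 + n/(n-2)) / Γ(n/2 + n/(n-2)), for every integer n ≥ 3. -/
/-!
Rescaling by `a = (2n - 4) ^ (1 / (n - 2))` maps the region `{w : 0 < w₁, |w|ⁿ < w₁²}` onto `G_n`,
so `vol G_n = aⁿ · vol {w : 0 < w₁, |w|ⁿ < w₁²}`. The slice of the normalized region at `w₁ = t` is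
the `(n - 1)`-ball of radius `√(t^(4/n) - t²)`, nonempty exactly for `0 < t < 1`, so its volume is
`ω_{n-1} ∫₀¹ (t^(4/n) - t²)^((n-1)/2) dt`. Factoring out `t^(4/n)` and substituting
`x = t^(2(n-2)/n)` turns this into a Beta integral `B(1/2 + n/(n-2), (n+1)/2)`.
-/

open MeasureTheory Real Set

theorem integral_rpow_mul_one_sub_rpow {u v : ℝ} (hu : 0 < u) (hv : 0 < v) :
    ∫ x in Ioo (0 : ℝ) 1, x ^ (u - 1) * (1 - x) ^ (v - 1) =
      Gamma u * Gamma v / Gamma (u + v) := by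
  have hβ := Complex.Gamma_mul_Gamma_eq_betaIntegral (s := u) (t := v)
    (by simpa using hu) (by simpa using hv)
  rw [← Complex.ofReal_add, Complex.Gamma_ofReal, Complex.Gamma_ofReal, Complex.Gamma_ofReal,
    Complex.betaIntegral, intervalIntegral.integral_of_le zero_le_one,
    integral_Ioc_eq_integral_Ioo] at hβ
  have hcast :
      ∫ x in Ioo (0 : ℝ) 1, (x : ℂ) ^ ((u : ℂ) - 1) * (1 - (x : ℂ)) ^ ((v : ℂ) - 1) =
      ((∫ x in Ioo (0 : ℝ) 1, x ^ (u - 1) * (1 - x) ^ (v - 1) : ℝ) : ℂ) := by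
    rw [← integral_complex_ofReal]
    refine setIntegral_congr_fun measurableSet_Ioo fun x hx => ?_
    rw [Complex.ofReal_mul, Complex.ofReal_cpow hx.1.le, Complex.ofReal_cpow (sub_nonneg.2 hx.2.le)]
    push_cast
    rfl
  rw [hcast, ← Complex.ofReal_mul, ← Complex.ofReal_mul] at hβ
  rw [eq_div_iff (Gamma_pos_of_pos (add_pos hu hv)).ne', mul_comm]
  exact_mod_cast hβ.symm

theorem integral_rpow_mul_one_sub_rpow_rpow {p u v : ℝ} (hp : 0 < p) (hu : 0 < u) (hv : 0 < v) :
    ∫ x in Ioo (0 : ℝ) 1, x ^ (p * u - 1) * (1 - x ^ p) ^ (v - 1) =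
      Gamma u * Gamma v / (p * Gamma (u + v)) := by
  have hsub := integral_comp_rpow_Ioi_of_pos
    (g := (Ioo 0 1).indicator fun y => y ^ (u - 1) * (1 - y) ^ (v - 1)) hp
  have hcomp : ∀ x ∈ Ioi (0 : ℝ),
      (p * x ^ (p - 1)) • (Ioo 0 1).indicator (fun y => y ^ (u - 1) * (1 - y) ^ (v - 1)) (x ^ p) =
      (Ioo 0 1).indicator (fun x => p * (x ^ (p * u - 1) * (1 - x ^ p) ^ (v - 1))) x := by
    intro x (hx : 0 < x)
    have hmem : x ^ p ∈ Ioo (0 : ℝ) 1 ↔ x ∈ Ioo (0 : ℝ) 1 := by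
      simp only [mem_Ioo, rpow_pos_of_pos hx, hx, true_and, rpow_lt_one_iff_of_pos hx, hp,
        hp.not_gt, and_false, and_true, false_or]
    by_cases hx1 : x ∈ Ioo (0 : ℝ) 1
    · rw [indicator_of_mem (hmem.2 hx1), indicator_of_mem hx1, smul_eq_mul, ← rpow_mul hx.le,
        show p * u - 1 = (p - 1) + p * (u - 1) by ring, rpow_add hx]
      ring
    · rw [indicator_of_notMem (mt hmem.1 hx1), indicator_of_notMem hx1, smul_zero]
  rw [setIntegral_congr_fun measurableSet_Ioi hcomp, setIntegral_indicator measurableSet_Ioo,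
    setIntegral_indicator measurableSet_Ioo, Ioi_inter_Ioo, max_self, integral_const_mul,
    integral_rpow_mul_one_sub_rpow hu hv] at hsub
  field_simp at hsub ⊢
  linear_combination hsub

namespace EuclideanSpace

theorem volume_setOf_mem_and_norm_lt {ι : Type*} [Fintype ι] [Nonempty ι] {s : Set ℝ}
    (hs : MeasurableSet s) {r : ℝ → ℝ} (hr : Measurable r) :
    volume {p : ℝ × EuclideanSpace ℝ ι | p.1 ∈ s ∧ ‖p.2‖ < r p.1} =
      ENNReal.ofReal (√π ^ Fintype.card ι / Gamma (Fintype.card ι / 2 + 1)) *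
        ∫⁻ t in s, ENNReal.ofReal (r t) ^ Fintype.card ι := by
  have hmeas : MeasurableSet {p : ℝ × EuclideanSpace ℝ ι | p.1 ∈ s ∧ ‖p.2‖ < r p.1} :=
    (measurable_fst hs).inter (measurableSet_lt measurable_snd.norm (hr.comp measurable_fst))
  have hslice : ∀ t,
      volume (Prod.mk t ⁻¹' {p : ℝ × EuclideanSpace ℝ ι | p.1 ∈ s ∧ ‖p.2‖ < r p.1}) =
        s.indicator (fun t => ENNReal.ofReal (√π ^ Fintype.card ι /
          Gamma (Fintype.card ι / 2 + 1)) * ENNReal.ofReal (r t) ^ Fintype.card ι) t := by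
    intro t
    by_cases ht : t ∈ s
    · rw [indicator_of_mem ht, mul_comm, ← volume_ball ι 0]
      congr 1; ext z; simp [ht]
    · rw [indicator_of_notMem ht,
        ← measure_empty (μ := (volume : Measure (EuclideanSpace ℝ ι)))]
      congr 1; ext z; simp [ht]
  rw [Measure.volume_eq_prod, Measure.prod_apply hmeas, lintegral_congr hslice,
    lintegral_indicator hs, lintegral_const_mul' _ _ ENNReal.ofReal_ne_top]

noncomputable def measurableEquivHeadTail (m : ℕ) :
    EuclideanSpace ℝ (Fin (m + 1)) ≃ᵐ ℝ × EuclideanSpace ℝ (Fin m) :=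
  ((MeasurableEquiv.toLp 2 (Fin (m + 1) → ℝ)).symm.trans
    (MeasurableEquiv.piFinSuccAbove (fun _ => ℝ) 0)).trans
    ((MeasurableEquiv.refl ℝ).prodCongr (MeasurableEquiv.toLp 2 (Fin m → ℝ)))

theorem measurableEquivHeadTail_apply (m : ℕ) (y : EuclideanSpace ℝ (Fin (m + 1))) :
    measurableEquivHeadTail m y = (y 0, WithLp.toLp 2 fun j => y j.succ) := rfl

theorem measurePreserving_measurableEquivHeadTail (m : ℕ) :
    MeasurePreserving (measurableEquivHeadTail m) := by
  refine ((volume_preserving_piFinSuccAbove (fun _ => ℝ) 0).comp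
    (volume_preserving_symm_measurableEquiv_toLp _)).trans ?_
  rw [Measure.volume_eq_prod, Measure.volume_eq_prod]
  exact (MeasurePreserving.id volume).prod (PiLp.volume_preserving_toLp _)

theorem norm_sq_eq_sq_add_norm_sq_measurableEquivHeadTail {m : ℕ}
    (y : EuclideanSpace ℝ (Fin (m + 1))) :
    ‖y‖ ^ 2 = y 0 ^ 2 + ‖(measurableEquivHeadTail m y).2‖ ^ 2 := by
  simp [norm_sq_eq, measurableEquivHeadTail_apply, Fin.sum_univ_succ]

theorem volume_setOf_mem_and_norm_sq_lt (m : ℕ) [NeZero m] {s : Set ℝ} (hs : MeasurableSet s)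
    {f : ℝ → ℝ} (hf : Measurable f) :
    volume {y : EuclideanSpace ℝ (Fin (m + 1)) | y 0 ∈ s ∧ ‖y‖ ^ 2 < f (y 0)} =
      ENNReal.ofReal (√π ^ m / Gamma (m / 2 + 1)) *
        ∫⁻ t in s, ENNReal.ofReal √(f t - t ^ 2) ^ m := by
  have hset : {y : EuclideanSpace ℝ (Fin (m + 1)) | y 0 ∈ s ∧ ‖y‖ ^ 2 < f (y 0)} =
      measurableEquivHeadTail m ⁻¹'
        {p : ℝ × EuclideanSpace ℝ (Fin m) | p.1 ∈ s ∧ ‖p.2‖ < √(f p.1 - p.1 ^ 2)} := by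
    ext y
    simp only [mem_ofPred_eq, mem_preimage, lt_sqrt (norm_nonneg _),
      norm_sq_eq_sq_add_norm_sq_measurableEquivHeadTail y, measurableEquivHeadTail_apply]
    constructor <;> rintro ⟨h1, h2⟩ <;> exact ⟨h1, by linarith⟩
  rw [hset, (measurePreserving_measurableEquivHeadTail m).measure_preimage_equiv,
    volume_setOf_mem_and_norm_lt (r := fun t => √(f t - t ^ 2)) hs (by fun_prop),
    Fintype.card_fin]

end EuclideanSpace

theorem volume_setOf_pos_and_norm_pow_lt_mul_sq {ι : Type*} [Fintype ι] (i : ι) (k : ℕ)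
    {a c : ℝ} (ha : 0 < a) (hac : c * a ^ 2 = a ^ k) :
    volume {y : EuclideanSpace ℝ ι | 0 < y i ∧ ‖y‖ ^ k < c * y i ^ 2} =
      ENNReal.ofReal (a ^ Fintype.card ι) *
        volume {w : EuclideanSpace ℝ ι | 0 < w i ∧ ‖w‖ ^ k < w i ^ 2} := by
  have hset : {y : EuclideanSpace ℝ ι | 0 < y i ∧ ‖y‖ ^ k < c * y i ^ 2} =
      (fun y => a⁻¹ • y) ⁻¹' {w | 0 < w i ∧ ‖w‖ ^ k < w i ^ 2} := by
    ext y
    simp only [mem_ofPred_eq, mem_preimage, PiLp.smul_apply, smul_eq_mul, norm_smul, norm_inv,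
      norm_of_nonneg ha.le, inv_pos, ha, mul_pos_iff_of_pos_left, mul_pow]
    refine and_congr_right fun _ => ?_
    rw [iff_comm, ← mul_lt_mul_iff_of_pos_left (pow_pos ha k), ← mul_assoc, ← mul_pow,
      mul_inv_cancel₀ ha.ne', one_pow, one_mul, ← hac]
    field_simp
  rw [hset, Measure.addHaar_preimage_smul volume (inv_ne_zero ha.ne'), finrank_euclideanSpace,
    inv_pow, inv_inv, abs_of_pos (by positivity)]

theorem sqrt_rpow_sub_sq_pow {m : ℕ} (hm : 1 ≤ m) {t : ℝ} (ht : t ∈ Ioo (0 : ℝ) 1) :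
    √(t ^ (4 / (m + 1 : ℝ)) - t ^ 2) ^ m =
      t ^ (2 * m / (m + 1 : ℝ)) * (1 - t ^ (2 * (m - 1) / (m + 1 : ℝ))) ^ (m / 2 : ℝ) := by
  obtain ⟨ht0, ht1⟩ := ht
  have hm' : (1 : ℝ) ≤ m := by exact_mod_cast hm
  have hfactor : t ^ (4 / (m + 1 : ℝ)) - t ^ 2 =
      t ^ (4 / (m + 1 : ℝ)) * (1 - t ^ (2 * (m - 1) / (m + 1 : ℝ))) := by
    rw [mul_one_sub, ← rpow_add ht0, ← rpow_natCast]
    congr 2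
    field_simp
    ring
  have hle : 0 ≤ 1 - t ^ (2 * (m - 1) / (m + 1 : ℝ)) :=
    sub_nonneg.2 (rpow_le_one ht0.le ht1.le (by positivity))
  rw [hfactor, sqrt_eq_rpow, ← rpow_natCast, ← rpow_mul (by positivity),
    mul_rpow (by positivity) hle, ← rpow_mul ht0.le]
  congr 2 <;> ring

theorem sqrt_rpow_sub_sq_eq_zero {m : ℕ} (hm : 1 ≤ m) {t : ℝ} (ht : 1 ≤ t) :
    √(t ^ (4 / (m + 1 : ℝ)) - t ^ 2) = 0 := by
  rw [sqrt_eq_zero', sub_nonpos, ← rpow_natCast]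
  refine rpow_le_rpow_of_exponent_le ht ?_
  rw [div_le_iff₀ (by positivity)]
  push_cast
  linarith [(Nat.one_le_cast.2 hm : (1 : ℝ) ≤ m)]

theorem setOf_pos_and_norm_pow_lt_sq_eq (m : ℕ) :
    {w : EuclideanSpace ℝ (Fin (m + 1)) | 0 < w 0 ∧ ‖w‖ ^ (m + 1) < w 0 ^ 2} =
      {w | w 0 ∈ Ioi 0 ∧ ‖w‖ ^ 2 < w 0 ^ (4 / (m + 1 : ℝ))} := by
  ext w
  simp only [mem_ofPred_eq, mem_Ioi, and_congr_right_iff]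
  intro hw
  have hnorm : ‖w‖ ^ (m + 1) = (‖w‖ ^ 2) ^ ((m + 1 : ℝ) / 2) := by
    rw [← rpow_natCast, ← rpow_natCast, ← rpow_mul (norm_nonneg w)]
    congr 1; push_cast; ring
  have hhead : w 0 ^ 2 = (w 0 ^ (4 / (m + 1 : ℝ))) ^ ((m + 1 : ℝ) / 2) := by
    rw [← rpow_mul hw.le, ← rpow_natCast]
    congr 1; field_simp; norm_num
  rw [hnorm, hhead, rpow_lt_rpow_iff (by positivity) (by positivity) (by positivity)]

theorem lintegral_sqrt_rpow_sub_sq_pow {m : ℕ} (hm : 2 ≤ m) :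
    ∫⁻ t in Ioi 0, ENNReal.ofReal √(t ^ (4 / (m + 1 : ℝ)) - t ^ 2) ^ m =
      ENNReal.ofReal (Gamma (1 / 2 + (m + 1) / (m - 1)) * Gamma (m / 2 + 1) /
        (2 * (m - 1) / (m + 1) * Gamma (1 / 2 + (m + 1) / (m - 1) + (m / 2 + 1)))) := by
  have hm1 : (0 : ℝ) < m - 1 := by
    have : (2 : ℝ) ≤ m := by exact_mod_cast hm
    linarith
  have hp : (0 : ℝ) < 2 * (m - 1) / (m + 1) := by positivity
  have hbeta := integral_rpow_mul_one_sub_rpow_rpow hp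
    (u := 1 / 2 + (m + 1) / (m - 1)) (v := m / 2 + 1) (by positivity) (by positivity)
  rw [show 2 * (m - 1) / (m + 1) * (1 / 2 + (m + 1) / (m - 1)) - 1 = 2 * m / (m + 1 : ℝ) by
    field_simp; ring, add_sub_cancel_right] at hbeta
  have hint : IntegrableOn
      (fun t : ℝ =>
        t ^ (2 * m / (m + 1 : ℝ)) * (1 - t ^ (2 * (m - 1) / (m + 1 : ℝ))) ^ (m / 2 : ℝ))
      (Ioo 0 1) :=
    Integrable.of_integral_ne_zero (by rw [hbeta]; positivity)
  have hnonneg : ∀ᵐ t ∂volume.restrict (Ioo (0 : ℝ) 1),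
      0 ≤ t ^ (2 * m / (m + 1 : ℝ)) * (1 - t ^ (2 * (m - 1) / (m + 1 : ℝ))) ^ (m / 2 : ℝ) :=
    (ae_restrict_iff' measurableSet_Ioo).2 <| ae_of_all _ fun t ht =>
      mul_nonneg (rpow_nonneg ht.1.le _)
        (rpow_nonneg (sub_nonneg.2 (rpow_le_one ht.1.le ht.2.le hp.le)) _)
  have hslice : ∀ t ∈ Ioi (0 : ℝ), ENNReal.ofReal √(t ^ (4 / (m + 1 : ℝ)) - t ^ 2) ^ m =
      (Ioo 0 1).indicator (fun t => ENNReal.ofReal (t ^ (2 * m / (m + 1 : ℝ)) *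
        (1 - t ^ (2 * (m - 1) / (m + 1 : ℝ))) ^ (m / 2 : ℝ))) t := by
    intro t (ht : 0 < t)
    by_cases ht1 : t < 1
    · rw [indicator_of_mem (show t ∈ Ioo 0 1 from ⟨ht, ht1⟩),
        ← ENNReal.ofReal_pow (sqrt_nonneg _), sqrt_rpow_sub_sq_pow (by omega) ⟨ht, ht1⟩]
    · rw [indicator_of_notMem (fun h => ht1 h.2),
        sqrt_rpow_sub_sq_eq_zero (by omega) (not_lt.1 ht1), ENNReal.ofReal_zero,
        zero_pow (by omega)]
  rw [setLIntegral_congr_fun measurableSet_Ioi hslice, lintegral_indicator measurableSet_Ioo,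
    Measure.restrict_restrict measurableSet_Ioo, inter_eq_left.2 Ioo_subset_Ioi_self,
    ← ofReal_integral_eq_lintegral_ofReal hint hnonneg, hbeta]

theorem volume_setOf_pos_and_norm_pow_lt_sq {m : ℕ} (hm : 2 ≤ m) :
    volume {w : EuclideanSpace ℝ (Fin (m + 1)) | 0 < w 0 ∧ ‖w‖ ^ (m + 1) < w 0 ^ 2} =
      ENNReal.ofReal (π ^ (m / 2 : ℝ) / (m + 1) * Gamma (1 / 2 + (m + 1) / (m - 1)) /
        Gamma ((m + 1) / 2 + (m + 1) / (m - 1))) := by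
  have hm1 : (0 : ℝ) < m - 1 := by
    have : (2 : ℝ) ≤ m := by exact_mod_cast hm
    linarith
  have : NeZero m := ⟨by omega⟩
  rw [setOf_pos_and_norm_pow_lt_sq_eq, EuclideanSpace.volume_setOf_mem_and_norm_sq_lt m
      measurableSet_Ioi (f := fun t => t ^ (4 / (m + 1 : ℝ))) (by fun_prop),
    lintegral_sqrt_rpow_sub_sq_pow hm, ← ENNReal.ofReal_mul (by positivity)]
  have hsqrt : √π ^ m = π ^ (m / 2 : ℝ) := by
    rw [sqrt_eq_rpow, ← rpow_natCast, ← rpow_mul pi_nonneg]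
    ring_nf
  have hΓ : Gamma (1 / 2 + (m + 1) / (m - 1) + (m / 2 + 1)) =
      ((m + 1) / 2 + (m + 1) / (m - 1)) * Gamma ((m + 1) / 2 + (m + 1) / (m - 1)) := by
    rw [← Gamma_add_one (by positivity)]
    ring_nf
  rw [hsqrt, hΓ]
  congr 1
  have := Gamma_pos_of_pos (show (0 : ℝ) < m / 2 + 1 by positivity)
  field_simp
  ring

theorem stmt_2 (n : ℕ) (hn : 3 ≤ n) :
    volume {y : EuclideanSpace ℝ (Fin n) |
        0 < y ⟨0, by omega⟩ ∧ ‖y‖ ^ n < (2 * (n : ℝ) - 4) * (y ⟨0, by omega⟩) ^ 2} =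
      ENNReal.ofReal
        ((π ^ (((n : ℝ) - 1) / 2) / n) * (2 * (n : ℝ) - 4) ^ ((n : ℝ) / ((n : ℝ) - 2)) *
          Real.Gamma (1 / 2 + (n : ℝ) / ((n : ℝ) - 2)) /
            Real.Gamma ((n : ℝ) / 2 + (n : ℝ) / ((n : ℝ) - 2))) := by
  obtain ⟨m, rfl⟩ : ∃ m, n = m + 1 := ⟨n - 1, by omega⟩
  have hm : 2 ≤ m := by omega
  have hm1 : (0 : ℝ) < m - 1 := by
    have : (2 : ℝ) ≤ m := by exact_mod_cast hm
    linarith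
  have hc : (0 : ℝ) < 2 * (m + 1) - 4 := by linarith
  have hpow : ∀ k : ℕ, ((2 * (m + 1) - 4 : ℝ) ^ (1 / (m - 1 : ℝ))) ^ k =
      (2 * (m + 1) - 4 : ℝ) ^ (k / (m - 1 : ℝ)) := fun k => by
    rw [← rpow_natCast, ← rpow_mul hc.le, one_div_mul_eq_div]
  have hscale : (2 * (m + 1) - 4) * ((2 * (m + 1) - 4 : ℝ) ^ (1 / (m - 1 : ℝ))) ^ 2 =
      ((2 * (m + 1) - 4 : ℝ) ^ (1 / (m - 1 : ℝ))) ^ (m + 1) := by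
    rw [hpow, hpow, ← rpow_one_add' hc.le (by positivity)]
    congr 1; push_cast; field_simp; ring
  push_cast
  simp only [Fin.zero_eta, add_sub_cancel_right, show (m : ℝ) + 1 - 2 = m - 1 by ring]
  rw [volume_setOf_pos_and_norm_pow_lt_mul_sq 0 (m + 1) (by positivity) hscale, Fintype.card_fin,
    volume_setOf_pos_and_norm_pow_lt_sq hm, ← ENNReal.ofReal_mul (by positivity), hpow]
  congr 1
  push_cast
  ring
end

section
/- The volume of G_3 = {y ∈ ℝ³ : y₁ > 0, |y|³ < 2y₁²} equals 16π/21, which is strictly less than the volume 4π/3 of the unit ball in ℝ³. -/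
/-!
Slice G_3 perpendicular to the y₁-axis. For t > 0 the slice at y₁ = t is the open disc
|z|² < (2t²)^(2/3) - t² = 2^(2/3) t^(4/3) - t², which is empty for t ≥ 2. By Cavalieri the volume
is π ∫₀² (2^(2/3) t^(4/3) - t²) dt = π (24/7 - 8/3) = 16π/21.
-/

open MeasureTheory Real Set

theorem volume_setOf_sq_add_sq_lt (c : ℝ) :
    volume {z : Fin 2 → ℝ | z 0 ^ 2 + z 1 ^ 2 < c} = ENNReal.ofReal (π * c) := by
  have hball : (MeasurableEquiv.toLp 2 (Fin 2 → ℝ)).symm ⁻¹' {z | z 0 ^ 2 + z 1 ^ 2 < c} =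
      Metric.ball (0 : EuclideanSpace ℝ (Fin 2)) √c := by
    ext z
    simp [Real.lt_sqrt (norm_nonneg z), EuclideanSpace.real_norm_sq_eq, Fin.sum_univ_two]
  rw [← (EuclideanSpace.volume_preserving_symm_measurableEquiv_toLp (Fin 2)).measure_preimage
      (measurableSet_lt (by fun_prop) measurable_const).nullMeasurableSet, hball,
    EuclideanSpace.volume_ball_fin_two, ← ENNReal.ofReal_pow (sqrt_nonneg c), sq_sqrt',
    ENNReal.ofReal_max, ENNReal.ofReal_zero, max_eq_left zero_le, mul_comm,
    ENNReal.ofReal_mul pi_nonneg]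

theorem volume_solidOfRevolution {s : Set ℝ} (hs : MeasurableSet s) {f : ℝ → ℝ}
    (hf : Measurable f) :
    volume {y : EuclideanSpace ℝ (Fin 3) | y 0 ∈ s ∧ y 1 ^ 2 + y 2 ^ 2 < f (y 0)} =
      ∫⁻ t in s, ENNReal.ofReal (π * f t) := by
  let S : Set (ℝ × (Fin 2 → ℝ)) := {p | p.1 ∈ s ∧ p.2 0 ^ 2 + p.2 1 ^ 2 < f p.1}
  have hS : MeasurableSet S :=
    (measurable_fst hs).inter (measurableSet_lt (by fun_prop) (hf.comp measurable_fst))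
  have e := (volume_preserving_piFinSuccAbove (fun _ : Fin 3 => ℝ) 0).comp
    (EuclideanSpace.volume_preserving_symm_measurableEquiv_toLp (Fin 3))
  rw [show {y : EuclideanSpace ℝ (Fin 3) | y 0 ∈ s ∧ y 1 ^ 2 + y 2 ^ 2 < f (y 0)} =
      (MeasurableEquiv.piFinSuccAbove (fun _ : Fin 3 => ℝ) 0 ∘
        (MeasurableEquiv.toLp 2 (Fin 3 → ℝ)).symm) ⁻¹' S from rfl,
    e.measure_preimage hS.nullMeasurableSet, Measure.volume_eq_prod, Measure.prod_apply hS,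
    ← lintegral_indicator hs]
  refine lintegral_congr fun t => ?_
  by_cases ht : t ∈ s
  · simp [ht, S, volume_setOf_sq_add_sq_lt]
  · simp [ht, S]

noncomputable def sliceRadiusSq (t : ℝ) : ℝ := 2 ^ (2 / 3 : ℝ) * t ^ (4 / 3 : ℝ) - t ^ 2

theorem pow_three_lt_two_mul_sq_iff {x t : ℝ} (hx : 0 ≤ x) (ht : 0 ≤ t) :
    x ^ 3 < 2 * t ^ 2 ↔ x ^ 2 < 2 ^ (2 / 3 : ℝ) * t ^ (4 / 3 : ℝ) := by
  set c : ℝ := 2 ^ (1 / 3 : ℝ) * t ^ (2 / 3 : ℝ)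
  have hc : 0 ≤ c := by positivity
  have hc3 : c ^ 3 = 2 * t ^ 2 := by
    rw [mul_pow, ← rpow_mul_natCast zero_le_two, ← rpow_mul_natCast ht]
    norm_num
  have hc2 : c ^ 2 = 2 ^ (2 / 3 : ℝ) * t ^ (4 / 3 : ℝ) := by
    rw [mul_pow, ← rpow_mul_natCast zero_le_two, ← rpow_mul_natCast ht]
    norm_num
  rw [← hc3, ← hc2, pow_lt_pow_iff_left₀ hx hc three_ne_zero,
    pow_lt_pow_iff_left₀ hx hc two_ne_zero]

theorem setOf_norm_pow_three_lt_eq :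
    {y : EuclideanSpace ℝ (Fin 3) | 0 < y 0 ∧ ‖y‖ ^ 3 < 2 * (y 0) ^ 2} =
      {y | y 0 ∈ Ioi 0 ∧ y 1 ^ 2 + y 2 ^ 2 < sliceRadiusSq (y 0)} := by
  ext y
  simp only [mem_ofPred_eq, mem_Ioi, sliceRadiusSq]
  refine and_congr_right fun hy => ?_
  rw [pow_three_lt_two_mul_sq_iff (norm_nonneg y) hy.le, EuclideanSpace.real_norm_sq_eq,
    Fin.sum_univ_three, lt_sub_iff_add_lt', ← add_assoc]

theorem continuous_sliceRadiusSq : Continuous sliceRadiusSq :=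
  ((continuous_rpow_const (by norm_num)).const_mul _).sub (continuous_pow 2)

theorem sliceRadiusSq_eq_mul {t : ℝ} (ht : 0 ≤ t) :
    sliceRadiusSq t = t ^ (4 / 3 : ℝ) * (2 ^ (2 / 3 : ℝ) - t ^ (2 / 3 : ℝ)) := by
  rw [sliceRadiusSq, mul_sub, ← rpow_add' ht (by norm_num)]
  norm_num
  ring

theorem sliceRadiusSq_nonneg {t : ℝ} (ht₀ : 0 ≤ t) (ht₂ : t ≤ 2) : 0 ≤ sliceRadiusSq t := by
  rw [sliceRadiusSq_eq_mul ht₀]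
  exact mul_nonneg (by positivity) (sub_nonneg.2 (rpow_le_rpow ht₀ ht₂ (by norm_num)))

theorem sliceRadiusSq_nonpos {t : ℝ} (ht : 2 ≤ t) : sliceRadiusSq t ≤ 0 := by
  rw [sliceRadiusSq_eq_mul (zero_le_two.trans ht)]
  exact mul_nonpos_of_nonneg_of_nonpos (by positivity)
    (sub_nonpos.2 (rpow_le_rpow zero_le_two ht (by norm_num)))

theorem integral_sliceRadiusSq : ∫ t in (0 : ℝ)..2, sliceRadiusSq t = 16 / 21 := by
  have h8 : (2 : ℝ) ^ (2 / 3 : ℝ) * 2 ^ (4 / 3 + 1 : ℝ) = 8 := by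
    rw [← rpow_add two_pos]
    norm_num
  simp only [sliceRadiusSq]
  rw [intervalIntegral.integral_sub ((intervalIntegral.intervalIntegrable_rpow
      (Or.inl (by norm_num))).const_mul _) ((continuous_pow 2).intervalIntegrable 0 2),
    intervalIntegral.integral_const_mul, integral_rpow (Or.inl (by norm_num)), integral_pow,
    zero_rpow (by norm_num), sub_zero, mul_div_assoc', h8]
  norm_num

theorem lintegral_sliceRadiusSq :
    ∫⁻ t in Ioi 0, ENNReal.ofReal (π * sliceRadiusSq t) = ENNReal.ofReal (16 * π / 21) := by
  have hvanish : ∫⁻ t in Ioi 2, ENNReal.ofReal (π * sliceRadiusSq t) = 0 :=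
    (setLIntegral_congr_fun measurableSet_Ioi fun t ht => ENNReal.ofReal_eq_zero.2
      (mul_nonpos_of_nonneg_of_nonpos pi_nonneg (sliceRadiusSq_nonpos (le_of_lt ht)))).trans
      lintegral_zero
  have hnonneg : 0 ≤ᵐ[volume.restrict (Ioc 0 2)] fun t => π * sliceRadiusSq t :=
    (ae_restrict_mem measurableSet_Ioc).mono fun t ht =>
      mul_nonneg pi_nonneg (sliceRadiusSq_nonneg ht.1.le ht.2)
  rw [← Ioc_union_Ioi_eq_Ioi zero_le_two, lintegral_union measurableSet_Ioi
      (Ioc_disjoint_Ioi le_rfl), hvanish, add_zero,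
    ← ofReal_integral_eq_lintegral_ofReal
      ((continuous_sliceRadiusSq.const_mul π).integrableOn_Ioc) hnonneg,
    integral_const_mul, ← intervalIntegral.integral_of_le zero_le_two, integral_sliceRadiusSq]
  ring_nf

theorem stmt_3 :
    volume {y : EuclideanSpace ℝ (Fin 3) | 0 < y 0 ∧ ‖y‖ ^ 3 < 2 * (y 0) ^ 2} =
      ENNReal.ofReal (16 * π / 21) ∧ 16 * π / 21 < 4 * π / 3 := by
  refine ⟨?_, by linarith [pi_pos]⟩
  rw [setOf_norm_pow_three_lt_eq,
    volume_solidOfRevolution measurableSet_Ioi continuous_sliceRadiusSq.measurable,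
    lintegral_sliceRadiusSq]
end

section
/- For all x > 0 and λ ∈ (0,1), Γ(x+1)/Γ(x+λ) > (x + λ/2)^{1-λ}. -/
/-!
Put `F(z) = Γ(z+1) / Γ(z+s) / (z + s/2)^(1-s)`. By the functional equation, `F(z+1) < F(z)`
amounts to `log (z+1) - log (z+s) < (1-s) (log (z+1+s/2) - log (z+s/2))`, a chord inequality for the
strictly convex function `t ↦ log (a+t) - log (a-t)` on `[0, a)` with `a = z + (1+s)/2`.
Log-convexity of `Γ` gives `F(z) ≥ (z / (z + s/2))^(1-s)`, which tends to `1`, so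
`F(z) > F(z+1) > F(z+2) > ⋯` forces `F(z) > 1`.
-/

open Real Set Filter Topology

lemma hasDerivAt_log_add_sub_log_sub {a t : ℝ} (ht : t ∈ Ioo (-a) a) :
    HasDerivAt (fun u => log (a + u) - log (a - u)) (2 * a / (a ^ 2 - t ^ 2)) t := by
  have h₁ : a + t ≠ 0 := by linarith [ht.1]
  have h₂ : a - t ≠ 0 := by linarith [ht.2]
  refine ((((hasDerivAt_id t).const_add a).log h₁).sub
    (((hasDerivAt_id t).const_sub a).log h₂)).congr_deriv ?_
  rw [show a ^ 2 - t ^ 2 = (a + t) * (a - t) by ring, id]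
  field_simp
  ring

lemma strictConvexOn_log_add_sub_log_sub {a : ℝ} (ha : 0 < a) :
    StrictConvexOn ℝ (Ico 0 a) (fun t => log (a + t) - log (a - t)) := by
  have hderiv : ∀ t ∈ Ico 0 a, HasDerivAt (fun u => log (a + u) - log (a - u))
      (2 * a / (a ^ 2 - t ^ 2)) t := fun t ht =>
    hasDerivAt_log_add_sub_log_sub ⟨by linarith [ht.1], ht.2⟩
  refine StrictMonoOn.strictConvexOn_of_deriv (convex_Ico 0 a)
    (fun t ht => (hderiv t ht).continuousAt.continuousWithinAt) ?_
  rw [interior_Ico]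
  intro t ht u hu htu
  rw [(hderiv t (Ioo_subset_Ico_self ht)).deriv, (hderiv u (Ioo_subset_Ico_self hu)).deriv]
  exact div_lt_div_of_pos_left (by linarith) (by nlinarith [hu.1, hu.2]) (by nlinarith [ht.1])

lemma log_add_sub_log_sub_lt {a c h : ℝ} (hca : c < a) (h₀ : 0 < h) (hhc : h < c) :
    log (a + h) - log (a - h) < h / c * (log (a + c) - log (a - c)) := by
  have hslope := (strictConvexOn_log_add_sub_log_sub (by linarith)).secant_strict_mono_aux2
    (x := 0) (y := h) (z := c) ⟨le_rfl, by linarith⟩ ⟨by linarith, hca⟩ h₀ hhc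
  simp only [add_zero, sub_zero, sub_self] at hslope
  calc log (a + h) - log (a - h) = h * ((log (a + h) - log (a - h)) / h) := by field_simp
    _ < h * ((log (a + c) - log (a - c)) / c) := by gcongr
    _ = h / c * (log (a + c) - log (a - c)) := by ring

lemma rpow_one_sub_le_Gamma_add_one_div_Gamma_add {y s : ℝ} (hy : 0 < y) (hs₀ : 0 < s)
    (hs₁ : s < 1) : y ^ (1 - s) ≤ Gamma (y + 1) / Gamma (y + s) := by
  have hΓ : 0 < Gamma y := Gamma_pos_of_pos hy
  have hconv : Gamma (y + s) ≤ Gamma y ^ (1 - s) * Gamma (y + 1) ^ s := by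
    convert Gamma_mul_add_mul_le_rpow_Gamma_mul_rpow_Gamma hy (by linarith : 0 < y + 1)
      (by linarith : 0 < 1 - s) hs₀ (by ring) using 2
    ring
  rw [Gamma_add_one hy.ne', mul_rpow hy.le hΓ.le] at hconv
  rw [le_div_iff₀ (Gamma_pos_of_pos (by linarith)), Gamma_add_one hy.ne']
  calc y ^ (1 - s) * Gamma (y + s)
      ≤ y ^ (1 - s) * (Gamma y ^ (1 - s) * (y ^ s * Gamma y ^ s)) := by gcongr
    _ = y ^ (1 - s + s) * Gamma y ^ (1 - s + s) := by rw [rpow_add hy, rpow_add hΓ]; ring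
    _ = y * Gamma y := by norm_num

lemma add_one_div_add_lt_rpow {y s : ℝ} (hy : 0 < y) (hs₀ : 0 < s) (hs₁ : s < 1) :
    (y + 1) / (y + s) < ((y + 1 + s / 2) / (y + s / 2)) ^ (1 - s) := by
  have key := log_add_sub_log_sub_lt (a := y + (1 + s) / 2) (c := 1 / 2) (h := (1 - s) / 2)
    (by linarith) (by linarith) (by linarith)
  rw [show y + (1 + s) / 2 + (1 - s) / 2 = y + 1 by ring,
    show y + (1 + s) / 2 - (1 - s) / 2 = y + s by ring,
    show y + (1 + s) / 2 + 1 / 2 = y + 1 + s / 2 by ring,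
    show y + (1 + s) / 2 - 1 / 2 = y + s / 2 by ring,
    show (1 - s) / 2 / (1 / 2) = 1 - s by ring] at key
  rw [lt_rpow_iff_log_lt (by positivity) (by positivity), log_div (by positivity) (by positivity),
    log_div (by positivity) (by positivity)]
  exact key

noncomputable def kershawRatio (s z : ℝ) : ℝ :=
  Gamma (z + 1) / Gamma (z + s) / (z + s / 2) ^ (1 - s)

lemma kershawRatio_add_one_lt {y s : ℝ} (hy : 0 < y) (hs₀ : 0 < s) (hs₁ : s < 1) :
    kershawRatio s (y + 1) < kershawRatio s y := by
  have hΓ : 0 < Gamma (y + 1) / Gamma (y + s) :=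
    div_pos (Gamma_pos_of_pos (by linarith)) (Gamma_pos_of_pos (by linarith))
  have key := add_one_div_add_lt_rpow hy hs₀ hs₁
  rw [div_rpow (by positivity) (by positivity), lt_div_iff₀ (by positivity)] at key
  have hshift : kershawRatio s (y + 1)
      = Gamma (y + 1) / Gamma (y + s) * ((y + 1) / (y + s) / (y + 1 + s / 2) ^ (1 - s)) := by
    rw [kershawRatio, Gamma_add_one (by linarith : y + 1 ≠ 0), add_right_comm y 1 s,
      Gamma_add_one (by linarith : y + s ≠ 0)]
    field_simp
  rw [hshift, kershawRatio, div_eq_mul_one_div _ ((y + s / 2) ^ (1 - s))]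
  refine mul_lt_mul_of_pos_left ?_ hΓ
  rw [div_lt_div_iff₀ (by positivity) (by positivity)]
  linarith

lemma rpow_div_add_le_kershawRatio {z s : ℝ} (hz : 0 < z) (hs₀ : 0 < s) (hs₁ : s < 1) :
    (z / (z + s / 2)) ^ (1 - s) ≤ kershawRatio s z := by
  rw [div_rpow hz.le (by positivity), kershawRatio]
  gcongr
  exact rpow_one_sub_le_Gamma_add_one_div_Gamma_add hz hs₀ hs₁

lemma tendsto_div_add_const_atTop (c : ℝ) :
    Tendsto (fun z : ℝ => z / (z + c)) atTop (𝓝 1) := by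
  have h : Tendsto (fun z : ℝ => 1 - c / (z + c)) atTop (𝓝 (1 - 0)) :=
    tendsto_const_nhds.sub
      (tendsto_const_nhds.div_atTop (tendsto_atTop_add_const_right _ c tendsto_id))
  rw [sub_zero] at h
  refine h.congr' ?_
  filter_upwards [eventually_gt_atTop (-c)] with z hz
  have : z + c ≠ 0 := by linarith
  field_simp
  ring

lemma one_le_kershawRatio {y s : ℝ} (hy : 0 < y) (hs₀ : 0 < s) (hs₁ : s < 1) :
    1 ≤ kershawRatio s y := by
  have hanti : ∀ n : ℕ, kershawRatio s (y + n) ≤ kershawRatio s y := by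
    intro n
    induction n with
    | zero => simp
    | succ n ih =>
      rw [Nat.cast_succ, ← add_assoc]
      exact (kershawRatio_add_one_lt (by positivity) hs₀ hs₁).le.trans ih
  have hlim : Tendsto (fun n : ℕ => ((y + n) / (y + n + s / 2)) ^ (1 - s)) atTop (𝓝 1) := by
    have hbase := (tendsto_div_add_const_atTop (s / 2)).rpow_const (p := 1 - s)
      (Or.inr (by linarith))
    simpa only [one_rpow, Function.comp_def] using
      hbase.comp (tendsto_atTop_add_const_left _ y tendsto_natCast_atTop_atTop)
  exact le_of_tendsto' hlim fun n =>
    (rpow_div_add_le_kershawRatio (by positivity) hs₀ hs₁).trans (hanti n)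

lemma one_lt_kershawRatio {y s : ℝ} (hy : 0 < y) (hs₀ : 0 < s) (hs₁ : s < 1) :
    1 < kershawRatio s y :=
  (one_le_kershawRatio (by linarith) hs₀ hs₁).trans_lt (kershawRatio_add_one_lt hy hs₀ hs₁)

theorem stmt_6 (x l : ℝ) (hx : 0 < x) (hl : l ∈ Set.Ioo (0 : ℝ) 1) :
    Real.Gamma (x + 1) / Real.Gamma (x + l) > (x + l / 2) ^ (1 - l) :=
  (one_lt_div (rpow_pos_of_pos (by linarith [hl.1]) _)).1 (one_lt_kershawRatio hx hl.1 hl.2)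
end

section
/- Let K(t) = 2^{-1+2t} · (t²+2)^{1-t}(t+2)^t / ((t²+t+1)(t²+1)) for t ∈ [0,1]. Then K(0) = K(1) = 1, and log K is strictly concave on (0,1); consequently K(t) ≥ 1 for all t ∈ [0,1]. -/
/-!
On `t > -2` we have `K = exp ∘ logK` with `logK` an explicit sum of logarithms. Differentiating
twice gives `logK'' = -P(t) / ((t²+2)(t+2)(t²+t+1)(t²+1))²` with `P` a polynomial of degree 13
with positive coefficients, so `logK` is strictly concave on `[0, ∞)`. Since `logK 0 = logK 1 = 0`,
concavity forces `logK ≥ 0`, i.e. `K ≥ 1`, on `[0, 1]`.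
-/

open Real Set

noncomputable def logK (t : ℝ) : ℝ :=
  (2 * t - 1) * log 2 + (1 - t) * log (t ^ 2 + 2) + t * log (t + 2)
    - log (t ^ 2 + t + 1) - log (t ^ 2 + 1)

noncomputable def logKDeriv (t : ℝ) : ℝ :=
  2 * log 2 - log (t ^ 2 + 2) + (1 - t) * (2 * t / (t ^ 2 + 2)) + log (t + 2) + t / (t + 2)
    - (2 * t + 1) / (t ^ 2 + t + 1) - 2 * t / (t ^ 2 + 1)

noncomputable def logKDeriv2 (t : ℝ) : ℝ :=
  -(16 + 44 * t + 88 * t ^ 2 + 132 * t ^ 3 + 106 * t ^ 4 + 185 * t ^ 5 + 151 * t ^ 6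
      + 215 * t ^ 7 + 158 * t ^ 8 + 120 * t ^ 9 + 57 * t ^ 10 + 19 * t ^ 11 + 4 * t ^ 12 + t ^ 13)
    / ((t ^ 2 + 2) ^ 2 * (t + 2) ^ 2 * (t ^ 2 + t + 1) ^ 2 * (t ^ 2 + 1) ^ 2)

lemma sq_add_self_add_one_pos (t : ℝ) : 0 < t ^ 2 + t + 1 := by
  nlinarith [sq_nonneg (t + 1 / 2)]

lemma exp_logK {t : ℝ} (ht : -2 < t) :
    exp (logK t) = 2 ^ (-1 + 2 * t) * (t ^ 2 + 2) ^ (1 - t) * (t + 2) ^ t /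
      ((t ^ 2 + t + 1) * (t ^ 2 + 1)) := by
  have h2 : 0 < t + 2 := by linarith
  have hp : 0 < t ^ 2 + 2 := by positivity
  rw [rpow_def_of_pos two_pos, rpow_def_of_pos hp, rpow_def_of_pos h2,
    ← exp_log (sq_add_self_add_one_pos t), ← exp_log (show 0 < t ^ 2 + 1 by positivity),
    ← exp_add, ← exp_add, ← exp_add, ← exp_sub, logK]
  congr 1
  ring

lemma logK_zero : logK 0 = 0 := by norm_num [logK]

lemma logK_one : logK 1 = 0 := by norm_num [logK]

lemma hasDerivAt_logK {t : ℝ} (ht : -2 < t) : HasDerivAt logK (logKDeriv t) t := by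
  have hX : HasDerivAt (fun x : ℝ => x) 1 t := hasDerivAt_id t
  have hX2 : HasDerivAt (fun x : ℝ => x ^ 2) (2 * t) t := by simpa using hasDerivAt_pow 2 t
  have hA := ((hX.const_mul 2).sub_const 1).mul_const (log 2)
  have hB := (hX.const_sub 1).mul ((hX2.add_const 2).log (by positivity))
  have hC := hX.mul ((hX.add_const 2).log (by linarith))
  have hD := ((hX2.add hX).add_const 1).log (sq_add_self_add_one_pos t).ne'
  have hE := (hX2.add_const 1).log (by positivity)
  refine ((((hA.add hB).add hC).sub hD).sub hE).congr_deriv ?_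
  simp only [logKDeriv, Pi.add_apply]
  ring

lemma hasDerivAt_logKDeriv {t : ℝ} (ht : -2 < t) : HasDerivAt logKDeriv (logKDeriv2 t) t := by
  have h2 : t + 2 ≠ 0 := by linarith
  have hp : t ^ 2 + 2 ≠ 0 := by positivity
  have hq := (sq_add_self_add_one_pos t).ne'
  have hr : t ^ 2 + 1 ≠ 0 := by positivity
  have hX : HasDerivAt (fun x : ℝ => x) 1 t := hasDerivAt_id t
  have hX2 : HasDerivAt (fun x : ℝ => x ^ 2) (2 * t) t := by simpa using hasDerivAt_pow 2 t
  have hA := (hasDerivAt_const t (2 * log 2)).sub ((hX2.add_const 2).log hp)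
  have hB := (hX.const_sub 1).mul ((hX.const_mul 2).div (hX2.add_const 2) hp)
  have hC := (hX.add_const 2).log h2
  have hD := hX.div (hX.add_const 2) h2
  have hE := ((hX.const_mul 2).add_const 1).div ((hX2.add hX).add_const 1) hq
  have hF := (hX.const_mul 2).div (hX2.add_const 1) hr
  refine (((((hA.add hB).add hC).add hD).sub hE).sub hF).congr_deriv ?_
  simp only [logKDeriv2, Pi.add_apply, Pi.div_apply]
  -- `field_simp` rewrites `t ^ 2 + t + 1` as `t * (t + 1) + 1` and needs it nonzero in that form
  have hq' : t * (t + 1) + 1 ≠ 0 := by convert hq using 1; ring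
  field_simp
  ring

lemma logKDeriv2_neg {t : ℝ} (ht : 0 ≤ t) : logKDeriv2 t < 0 := by
  have := sq_add_self_add_one_pos t
  exact div_neg_of_neg_of_pos (neg_neg_of_pos (by positivity)) (by positivity)

lemma strictConcaveOn_logK : StrictConcaveOn ℝ (Ici 0) logK := by
  refine strictConcaveOn_of_deriv2_neg (convex_Ici 0)
    (fun t ht => (hasDerivAt_logK (by linarith [mem_Ici.mp ht])).continuousAt.continuousWithinAt)
    fun t ht => ?_
  rw [interior_Ici] at ht
  have hderiv : deriv logK =ᶠ[nhds t] logKDeriv :=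
    Filter.eventually_of_mem (Ioi_mem_nhds (by linarith [mem_Ioi.mp ht]))
      fun x hx => (hasDerivAt_logK hx).deriv
  rw [Function.iterate_succ_apply, Function.iterate_one, hderiv.deriv_eq,
    (hasDerivAt_logKDeriv (by linarith [mem_Ioi.mp ht])).deriv]
  exact logKDeriv2_neg ht.le

theorem stmt_7 (K : ℝ → ℝ)
    (hK : ∀ t : ℝ, K t = 2 ^ (-1 + 2 * t) * (t ^ 2 + 2) ^ (1 - t) * (t + 2) ^ t /
        ((t ^ 2 + t + 1) * (t ^ 2 + 1))) :
    K 0 = 1 ∧ K 1 = 1 ∧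
      StrictConcaveOn ℝ (Set.Ioo (0 : ℝ) 1) (fun t => Real.log (K t)) ∧
      ∀ t ∈ Set.Icc (0 : ℝ) 1, 1 ≤ K t := by
  have hK_exp : ∀ t, 0 ≤ t → K t = exp (logK t) := fun t ht =>
    (hK t).trans (exp_logK (by linarith)).symm
  refine ⟨by rw [hK_exp 0 le_rfl, logK_zero, exp_zero],
    by rw [hK_exp 1 zero_le_one, logK_one, exp_zero], ?_, fun t ht => ?_⟩
  · refine (strictConcaveOn_logK.subset (Ioo_subset_Icc_self.trans Icc_subset_Ici_self)
      (convex_Ioo 0 1)).congr fun t ht => ?_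
    rw [hK_exp t ht.1.le, log_exp]
  · have hlogK := strictConcaveOn_logK.concaveOn.ge_on_segment (mem_Ici.mpr le_rfl)
      (mem_Ici.mpr zero_le_one) (by rwa [segment_eq_Icc zero_le_one])
    rw [logK_zero, logK_one, min_self] at hlogK
    rw [hK_exp t ht.1]
    exact one_le_exp hlogK
end

section
/- For every integer n ≥ 4 and every real z ≥ 0, one has (1 + 2z/(n-2))^{n/2} > z² + z, i.e., the function ψ(z) = (1 + 2z/(n-2))^{n/2} - z² - z is strictly positive on [0, ∞). -/
private lemma Qpos (K z : ℝ) (hK : 2 ≤ K) (hz : 0 ≤ z) :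
    0 < 15*K^4 + 30*K^3*(K+2)*z + 30*K^2*(K+2)*(K+1)*z^2 + 20*K^2*(K+2)*(K+1)*z^3
      + 10*K*(K+2)*(K+1)*(K-1)*z^4 + 4*(K+2)*(K+1)*(K-1)*(K-2)*z^5
      - 15*K^4*(z^4+2*z^3+z^2) := by
  obtain ⟨a, ha, rfl⟩ : ∃ a, 0 ≤ a ∧ K = a + 2 := ⟨K-2, by linarith, by ring⟩
  have p4 : 0 ≤ 15+30*z+15*z^2-10*z^3-5*z^4+4*z^5 := by
    nlinarith [sq_nonneg (z^2-z-1), sq_nonneg (z-1), sq_nonneg (z-2), mul_nonneg hz hz,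
      sq_nonneg (z^2-2*z), mul_nonneg (mul_nonneg hz hz) hz, sq_nonneg (z^2-z-2)]
  have p3 : 0 ≤ 120+300*z+210*z^2-20*z^3-20*z^4+32*z^5 := by
    nlinarith [sq_nonneg (z^2-z-1), sq_nonneg (z-1), mul_nonneg hz hz, sq_nonneg (z^2-z),
      mul_nonneg (mul_nonneg hz hz) hz]
  have p2 : 0 ≤ 360+1080*z+960*z^2+160*z^3-10*z^4+76*z^5 := by
    nlinarith [sq_nonneg (z-1), mul_nonneg hz hz, mul_nonneg (mul_nonneg hz hz) hz,
      sq_nonneg (z^2-z)]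
  nlinarith [mul_nonneg (pow_nonneg ha 4) p4, mul_nonneg (pow_nonneg ha 3) p3,
    mul_nonneg (pow_nonneg ha 2) p2, mul_nonneg ha hz,
    mul_nonneg ha (pow_nonneg hz 2), mul_nonneg ha (pow_nonneg hz 3),
    mul_nonneg ha (pow_nonneg hz 4), mul_nonneg ha (pow_nonneg hz 5),
    pow_nonneg hz 2, pow_nonneg hz 3, pow_nonneg hz 4, pow_nonneg hz 5, hz]

private lemma poly5 (y : ℝ) (hy : 0 ≤ y) (m : ℕ) :
    1 + m*y + m*(m-1)/2*y^2 + m*(m-1)*(m-2)/6*y^3 + m*(m-1)*(m-2)*(m-3)/24*y^4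
      + m*(m-1)*(m-2)*(m-3)*(m-4)/120*y^5 ≤ (1+y)^m := by
  induction m with
  | zero => norm_num
  | succ m ih =>
    have hff : 0 ≤ (m:ℝ)*((m:ℝ)-1)*((m:ℝ)-2)*((m:ℝ)-3)*((m:ℝ)-4) := by
      rcases m with _|_|_|_|_|m
      · norm_num
      · norm_num
      · norm_num
      · norm_num
      · norm_num
      · have h4 : (4:ℝ) ≤ ((m+5:ℕ):ℝ) := by push_cast; linarith
        have h0 : (0:ℝ) ≤ ((m+5:ℕ):ℝ) := by linarith
        apply mul_nonneg; apply mul_nonneg; apply mul_nonneg; apply mul_nonneg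
        all_goals linarith
    have h2 : 1 + ((m:ℝ)+1)*y + ((m:ℝ)+1)*(((m:ℝ)+1)-1)/2*y^2
        + ((m:ℝ)+1)*(((m:ℝ)+1)-1)*(((m:ℝ)+1)-2)/6*y^3
        + ((m:ℝ)+1)*(((m:ℝ)+1)-1)*(((m:ℝ)+1)-2)*(((m:ℝ)+1)-3)/24*y^4
        + ((m:ℝ)+1)*(((m:ℝ)+1)-1)*(((m:ℝ)+1)-2)*(((m:ℝ)+1)-3)*(((m:ℝ)+1)-4)/120*y^5
        ≤ (1 + (m:ℝ)*y + m*(m-1)/2*y^2 + m*(m-1)*(m-2)/6*y^3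
        + m*(m-1)*(m-2)*(m-3)/24*y^4 + m*(m-1)*(m-2)*(m-3)*(m-4)/120*y^5) * (1+y) := by
      nlinarith [mul_nonneg hff (pow_nonneg hy 6)]
    have h1 : (1 + (m:ℝ)*y + m*(m-1)/2*y^2 + m*(m-1)*(m-2)/6*y^3
        + m*(m-1)*(m-2)*(m-3)/24*y^4 + m*(m-1)*(m-2)*(m-3)*(m-4)/120*y^5) * (1+y)
        ≤ (1+y)^m * (1+y) :=
      mul_le_mul_of_nonneg_right ih (by linarith)
    rw [pow_succ (1+y) m]
    push_cast
    linarith [h2.trans h1]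

theorem stmt_8 (n : ℕ) (hn : 4 ≤ n) (z : ℝ) (hz : 0 ≤ z) :
    (1 + 2 * z / ((n : ℝ) - 2)) ^ ((n : ℝ) / 2) > z ^ 2 + z := by
  have hN : (4:ℝ) ≤ (n:ℝ) := by exact_mod_cast hn
  set K : ℝ := (n:ℝ) - 2 with hKdef
  have hK : 2 ≤ K := by simp [hKdef]; linarith
  have hKpos : (0:ℝ) < K := by linarith
  have hx : 0 ≤ 2 * z / K := by positivity
  set b : ℝ := 1 + 2 * z / K with hbdef
  have hb : 0 < b := by rw [hbdef]; linarith
  -- nat-power key inequality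
  have hP := poly5 (2 * z / K) hx n
  have hNe : ((n:ℝ)) = K + 2 := by simp [hKdef]
  have hkey : (z^2 + z)^2 < b ^ n := by
    refine lt_of_lt_of_le ?_ hP
    have hne : K ≠ 0 := ne_of_gt hKpos
    have hQ := Qpos K z hK hz
    have hiden : 1 + (n:ℝ)*(2*z/K) + (n:ℝ)*((n:ℝ)-1)/2*(2*z/K)^2
        + (n:ℝ)*((n:ℝ)-1)*((n:ℝ)-2)/6*(2*z/K)^3
        + (n:ℝ)*((n:ℝ)-1)*((n:ℝ)-2)*((n:ℝ)-3)/24*(2*z/K)^4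
        + (n:ℝ)*((n:ℝ)-1)*((n:ℝ)-2)*((n:ℝ)-3)*((n:ℝ)-4)/120*(2*z/K)^5
        - (z^2+z)^2
        = (15*K^4 + 30*K^3*(K+2)*z + 30*K^2*(K+2)*(K+1)*z^2 + 20*K^2*(K+2)*(K+1)*z^3
          + 10*K*(K+2)*(K+1)*(K-1)*z^4 + 4*(K+2)*(K+1)*(K-1)*(K-2)*z^5
          - 15*K^4*(z^4+2*z^3+z^2)) / (15*K^4) := by
      rw [hNe]
      field_simp
      ring
    have hpos : 0 < (15*K^4 + 30*K^3*(K+2)*z + 30*K^2*(K+2)*(K+1)*z^2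
        + 20*K^2*(K+2)*(K+1)*z^3 + 10*K*(K+2)*(K+1)*(K-1)*z^4
        + 4*(K+2)*(K+1)*(K-1)*(K-2)*z^5 - 15*K^4*(z^4+2*z^3+z^2)) / (15*K^4) :=
      div_pos hQ (by positivity)
    linarith [hiden ▸ hpos]
  -- relate rpow to nat pow
  have hbn : (b ^ ((n:ℝ)/2))^2 = b ^ n := by
    rw [← Real.rpow_natCast (b ^ ((n:ℝ)/2)) 2, ← Real.rpow_natCast b n,
      ← Real.rpow_mul hb.le]
    norm_num
  have h0 : 0 ≤ b ^ ((n:ℝ)/2) := (Real.rpow_pos_of_pos hb _).le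
  have : (z^2+z)^2 < (b ^ ((n:ℝ)/2))^2 := by rw [hbn]; exact hkey
  exact lt_of_pow_lt_pow_left₀ 2 h0 this
end

section
/- Let n ≥ 4 be an integer and θ ≥ 1/√(2n-4). Then D(θ) ⊆ B(θ), where D(θ) = {y ∈ ℝⁿ : |y + θe₁|ⁿ ≤ (2n-4)y₁(y₁+θ), y₁ ≥ 0} and B(θ) = {y ∈ ℝⁿ : |y - θe₁| ≤ 1}. -/
/-! Since `‖y + θe₁‖² = ‖y - θe₁‖² + 4θy₁`, it suffices to show
`(2n - 4) y₁ (y₁ + θ) ≤ (1 + x)^(n/2)` with `x = 4θy₁`. Putting `u = (2n - 4)θy₁`, the bound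
`(2n - 4)θ² ≥ 1` gives `(2n - 4) y₁ (y₁ + θ) ≤ u (1 + u)`, and `u (1 + u) ≤ (1 + x)^(n/2)` follows
from the binomial expansion of `(1 + x)^⌈n/2⌉` up to the cubic term together with the AM-GM bound
`D x² ≤ 1 + S x³`; for odd `n` the half power is traded for a factor `1 + x/2`, and `n = 5` is
checked directly. -/

theorem one_add_mul_add_cubic_le_pow (m : ℕ) {x : ℝ} (hx : 0 ≤ x) :
    1 + m * x + m * (m - 1) / 2 * x ^ 2 + m * (m - 1) * (m - 2) / 6 * x ^ 3 ≤ (1 + x) ^ m := by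
  induction m with
  | zero => simp
  | succ m ih =>
    have hm2 : (0 : ℝ) ≤ m * (m - 1) * (m - 2) := by
      rcases Nat.lt_or_ge m 2 with h | h
      · interval_cases m <;> norm_num
      · have : (2 : ℝ) ≤ m := by exact_mod_cast h
        have : (0 : ℝ) ≤ m * (m - 1) := by nlinarith
        nlinarith
    calc _ ≤ (1 + m * x + m * (m - 1) / 2 * x ^ 2 + m * (m - 1) * (m - 2) / 6 * x ^ 3)
          * (1 + x) := by
          push_cast
          nlinarith [mul_nonneg hm2 (pow_nonneg hx 4)]
      _ ≤ (1 + x) ^ (m + 1) := by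
          rw [pow_succ]
          exact mul_le_mul_of_nonneg_right ih (by linarith)

/-- The cubic `1 - D x² + S x³` is minimal at `x = 2D / 3S`, where it equals `1 - 4D³ / 27S²`. -/
theorem mul_sq_le_one_add_mul_cube {D S x : ℝ} (hD : 0 ≤ D) (hS : 0 ≤ S) (hx : 0 ≤ x)
    (h : 4 * D ^ 3 ≤ 27 * S ^ 2) : D * x ^ 2 ≤ 1 + S * x ^ 3 := by
  rcases hS.eq_or_lt with rfl | hS
  · obtain rfl : D = 0 := pow_eq_zero_iff three_ne_zero |>.mp (by nlinarith [pow_nonneg hD 3])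
    simp
  · have hmin : 0 ≤ 27 * S ^ 3 * x ^ 3 - 27 * S ^ 2 * D * x ^ 2 + 4 * D ^ 3 := by
      nlinarith [mul_nonneg (sq_nonneg (3 * S * x - 2 * D)) (by positivity : 0 ≤ 3 * S * x + D)]
    have : S ^ 2 * (D * x ^ 2) ≤ S ^ 2 * (1 + S * x ^ 3) := by nlinarith
    exact le_of_mul_le_mul_left this (by positivity)

theorem sub_one_mul_one_add_le_one_add_pow {m : ℕ} (hm : 2 ≤ m) {x : ℝ} (hx : 0 ≤ x) :
    (m - 1) * x * (1 + (m - 1) * x) ≤ (1 + x) ^ m := by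
  have hm : (2 : ℝ) ≤ m := by exact_mod_cast hm
  have hcubic : ((m : ℝ) - 1) * (m - 2) / 2 * x ^ 2 ≤ 1 + m * (m - 1) * (m - 2) / 6 * x ^ 3 := by
    have h2 : (0 : ℝ) ≤ m - 2 := by linarith
    have h1 : (0 : ℝ) ≤ (m - 1) * (m - 2) := by nlinarith
    apply mul_sq_le_one_add_mul_cube (by positivity) (by nlinarith) hx
    have : (0 : ℝ) ≤ (m - 1) ^ 2 * (m - 2) ^ 2 := by positivity
    nlinarith
  nlinarith [one_add_mul_add_cubic_le_pow m hx]

theorem mul_one_add_mul_one_add_half_le_one_add_pow {m : ℕ} (hm : 3 ≤ m) {x : ℝ}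
    (hx : 0 ≤ x) :
    (2 * m - 1) / 2 * x * (1 + (2 * m - 1) / 2 * x) * (1 + x / 2) ≤ (1 + x) ^ (m + 1) := by
  have hm : (3 : ℝ) ≤ m := by exact_mod_cast hm
  have hcubic :
      (m : ℝ) * (m - 2) / 2 * x ^ 2 ≤ 1 + (4 * m ^ 3 - 12 * m ^ 2 + 8 * m - 3) / 24 * x ^ 3 := by
    have h3 : (0 : ℝ) ≤ m - 3 := by linarith
    apply mul_sq_le_one_add_mul_cube (by nlinarith) (by nlinarith) hx
    nlinarith [pow_nonneg h3 2, pow_nonneg h3 3, pow_nonneg h3 4, pow_nonneg h3 5, pow_nonneg h3 6]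
  have := one_add_mul_add_cubic_le_pow (m + 1) hx
  push_cast at this
  nlinarith

theorem sq_mul_one_add_le_one_add_pow_five {x : ℝ} (hx : 0 ≤ x) :
    (3 / 2 * x * (1 + 3 / 2 * x)) ^ 2 ≤ (1 + x) ^ 5 := by
  nlinarith [mul_nonneg (pow_nonneg hx 3) (sq_nonneg (x - 1 / 32)), pow_nonneg hx 2,
    pow_nonneg hx 3]

theorem sq_mul_one_add_le_one_add_pow {n : ℕ} (hn : 4 ≤ n) {x : ℝ} (hx : 0 ≤ x) :
    ((n - 2) / 2 * x * (1 + (n - 2) / 2 * x)) ^ 2 ≤ (1 + x) ^ n := by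
  obtain ⟨m, rfl | rfl⟩ := Nat.even_or_odd' n
  · have hm : ((2 * m : ℕ) - 2) / 2 = (m - 1 : ℝ) := by push_cast; ring
    rw [hm, pow_mul']
    have : (1 : ℝ) ≤ m := by exact_mod_cast (by omega : 1 ≤ m)
    have : (0 : ℝ) ≤ (m - 1) * x := mul_nonneg (by linarith) hx
    exact pow_le_pow_left₀ (by positivity) (sub_one_mul_one_add_le_one_add_pow (by omega) hx) 2
  · have hm : ((2 * m + 1 : ℕ) - 2) / 2 = (2 * m - 1 : ℝ) / 2 := by push_cast; ring
    rw [hm]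
    obtain rfl | hm3 : m = 2 ∨ 3 ≤ m := by omega
    · convert sq_mul_one_add_le_one_add_pow_five hx using 3 <;> norm_num
    set v := (2 * m - 1 : ℝ) / 2 * x * (1 + (2 * m - 1) / 2 * x)
    have hv : 0 ≤ v := by
      have : (0 : ℝ) ≤ (2 * m - 1) / 2 * x := by
        have : (3 : ℝ) ≤ m := by exact_mod_cast hm3
        have : (0 : ℝ) ≤ 2 * m - 1 := by linarith
        positivity
      positivity
    -- `(1 + x / 2) ^ 2 ≥ 1 + x` trades the missing half power of `1 + x` for a factor `1 + x / 2`.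
    have hsq : v ^ 2 * (1 + x) ≤ (1 + x) ^ (2 * m + 1) * (1 + x) := calc
      v ^ 2 * (1 + x) ≤ (v * (1 + x / 2)) ^ 2 := by nlinarith [sq_nonneg (v * x)]
      _ ≤ ((1 + x) ^ (m + 1)) ^ 2 :=
        pow_le_pow_left₀ (by positivity) (mul_one_add_mul_one_add_half_le_one_add_pow hm3 hx) 2
      _ = (1 + x) ^ (2 * m + 1) * (1 + x) := by ring
    exact le_of_mul_le_mul_right hsq (by linarith)

theorem sq_mul_mul_add_le_one_add_pow {n : ℕ} (hn : 4 ≤ n) {θ t : ℝ} (hθ : 0 ≤ θ)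
    (hcθ : 1 ≤ (2 * n - 4) * θ ^ 2) (ht : 0 ≤ t) :
    ((2 * n - 4) * t * (t + θ)) ^ 2 ≤ (1 + 4 * θ * t) ^ n := by
  have hn : (4 : ℝ) ≤ n := by exact_mod_cast hn
  have hu : (n - 2) / 2 * (4 * θ * t) = (2 * n - 4) * θ * t := by ring
  have hle : (2 * n - 4) * t * (t + θ) ≤ (2 * n - 4) * θ * t * (1 + (2 * n - 4) * θ * t) := by
    nlinarith [mul_nonneg (mul_nonneg (by linarith : (0 : ℝ) ≤ 2 * n - 4) (sq_nonneg t))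
      (sub_nonneg.mpr hcθ)]
  calc ((2 * n - 4) * t * (t + θ)) ^ 2
      ≤ ((2 * n - 4) * θ * t * (1 + (2 * n - 4) * θ * t)) ^ 2 := by
        have : (0 : ℝ) ≤ 2 * n - 4 := by linarith
        exact pow_le_pow_left₀ (by positivity) hle 2
    _ ≤ (1 + 4 * θ * t) ^ n := by
        rw [← hu]
        exact sq_mul_one_add_le_one_add_pow (by exact_mod_cast hn) (by positivity)

theorem norm_add_smul_sq_eq {E : Type*} [NormedAddCommGroup E] [InnerProductSpace ℝ E]
    (y e : E) (θ : ℝ) : ‖y + θ • e‖ ^ 2 = ‖y - θ • e‖ ^ 2 + 4 * θ * inner ℝ y e := by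
  rw [norm_add_sq_real, norm_sub_sq_real, real_inner_smul_right]
  ring

theorem stmt_15 (n : ℕ) (hn : 4 ≤ n) (θ : ℝ)
    (hθ : 1 / Real.sqrt (2 * (n : ℝ) - 4) ≤ θ)
    (y : EuclideanSpace ℝ (Fin n)) (hy1 : 0 ≤ y ⟨0, by omega⟩)
    (hy : ‖y + θ • EuclideanSpace.single (⟨0, by omega⟩ : Fin n) (1 : ℝ)‖ ^ n ≤
      (2 * (n : ℝ) - 4) * y ⟨0, by omega⟩ * (y ⟨0, by omega⟩ + θ)) :
    ‖y - θ • EuclideanSpace.single (⟨0, by omega⟩ : Fin n) (1 : ℝ)‖ ≤ 1 := by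
  set e := EuclideanSpace.single (⟨0, by omega⟩ : Fin n) (1 : ℝ)
  set t := y ⟨0, by omega⟩
  have hc : 0 < 2 * (n : ℝ) - 4 := by
    have : (4 : ℝ) ≤ n := by exact_mod_cast hn
    linarith
  have hθ0 : 0 ≤ θ := le_trans (by positivity) hθ
  have hcθ : 1 ≤ (2 * n - 4) * θ ^ 2 := by
    have := pow_le_pow_left₀ (by positivity) hθ 2
    rwa [div_pow, Real.sq_sqrt hc.le, one_pow, div_le_iff₀ hc, mul_comm] at this
  have hsplit : ‖y + θ • e‖ ^ 2 = ‖y - θ • e‖ ^ 2 + 4 * θ * t := by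
    rw [norm_add_smul_sq_eq, EuclideanSpace.inner_single_right, one_mul]
    rfl
  have hR : ‖y + θ • e‖ ^ 2 ≤ 1 + 4 * θ * t := by
    refine le_of_pow_le_pow_left₀ (by omega : n ≠ 0) (by positivity) ?_
    calc (‖y + θ • e‖ ^ 2) ^ n = (‖y + θ • e‖ ^ n) ^ 2 := by ring
      _ ≤ ((2 * n - 4) * t * (t + θ)) ^ 2 := pow_le_pow_left₀ (by positivity) hy 2
      _ ≤ (1 + 4 * θ * t) ^ n := sq_mul_mul_add_le_one_add_pow hn hθ0 hcθ hy1
  exact (pow_le_one_iff_of_nonneg (norm_nonneg _) two_ne_zero).mp (by linarith)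
end

section
/- Let n ≥ 3, 0 < |x| ≤ 1, z ∈ ℝⁿ with |z| < 1, x ≠ z, and set x* = x/|x|. Define K₀(x,z) = |x-z|^{2-n} - |x* - |x|z|^{2-n} - ((n-2)/2)·(1-|z|²)(1-|x|²|z|²)/|x* - |x|z|ⁿ. Then K₀(x,z) ≥ -g(x,z)|x* - |x|z|^{2-n}, where g(x,z) = 2(n-2)·(x*·(x*-z))·(x*·(x* - |x|z))/|x* - |x|z|² ≥ 0. -/
/-!
Write `u = x / |x|` and `r = |x|`. Expanding squares gives
`|u - r z|² - |x - z|² = (1 - r²)(1 - |z|²) ≥ 0`, so the first difference in `K₀` is nonnegative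
because `2 - n ≤ 0`. For every `w`, `1 - |w|² = 2 u·(u - w) - |u - w|² ≤ 2 u·(u - w)`; with `w = z`
and `w = r z` this bounds the last term of `K₀` by `2(n - 2) u·(u - z) u·(u - r z) / |u - r z|ⁿ`,
which is `g |u - r z|^{2-n}`.
-/

open scoped RealInnerProductSpace

section InnerProductSpace

variable {E : Type*} [NormedAddCommGroup E] [InnerProductSpace ℝ E] {u : E}

theorem one_sub_norm_sq_eq_two_inner_sub_sub (hu : ‖u‖ = 1) (w : E) :
    1 - ‖w‖ ^ 2 = 2 * ⟪u, u - w⟫ - ‖u - w‖ ^ 2 := by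
  rw [norm_sub_sq_real, inner_sub_right, real_inner_self_eq_norm_sq, hu]
  ring

theorem one_sub_norm_sq_le_two_inner_sub (hu : ‖u‖ = 1) (w : E) :
    1 - ‖w‖ ^ 2 ≤ 2 * ⟪u, u - w⟫ := by
  rw [one_sub_norm_sq_eq_two_inner_sub_sub hu]
  linarith [sq_nonneg ‖u - w‖]

theorem inner_sub_pos_of_norm_lt_one (hu : ‖u‖ = 1) {w : E} (hw : ‖w‖ < 1) :
    0 < ⟪u, u - w⟫ := by
  have := real_inner_le_norm u w
  rw [inner_sub_right, real_inner_self_eq_norm_sq, hu, one_pow]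
  rw [hu, one_mul] at this
  linarith

theorem norm_sub_smul_sq_sub_norm_smul_sub_sq (hu : ‖u‖ = 1) (r : ℝ) (z : E) :
    ‖u - r • z‖ ^ 2 - ‖r • u - z‖ ^ 2 = (1 - r ^ 2) * (1 - ‖z‖ ^ 2) := by
  rw [norm_sub_sq_real, norm_sub_sq_real, norm_smul, norm_smul, real_inner_smul_left,
    real_inner_smul_right, hu, Real.norm_eq_abs]
  simp only [mul_pow, sq_abs]
  ring

theorem norm_smul_sub_le_norm_sub_smul (hu : ‖u‖ = 1) {r : ℝ} (hr : |r| ≤ 1) {z : E}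
    (hz : ‖z‖ ≤ 1) : ‖r • u - z‖ ≤ ‖u - r • z‖ := by
  have h := norm_sub_smul_sq_sub_norm_smul_sub_sq hu r z
  have hr2 : r ^ 2 ≤ 1 := by nlinarith [abs_nonneg r, sq_abs r]
  have hz2 : ‖z‖ ^ 2 ≤ 1 := by nlinarith [norm_nonneg z]
  refine le_of_sq_le_sq ?_ (norm_nonneg _)
  nlinarith [mul_nonneg (sub_nonneg.2 hr2) (sub_nonneg.2 hz2)]

end InnerProductSpace

theorem zpow_two_sub_sub_zpow_two_sub_sub_div_zpow_ge {n : ℤ} (hn : 2 ≤ n) {c d D α β A B : ℝ}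
    (hc : 0 ≤ c) (hd : 0 < d) (hdD : d ≤ D) (hα : α ≤ 2 * A) (hβ : β ≤ 2 * B) (hβ0 : 0 ≤ β) (hA : 0 ≤ A) :
    d ^ (2 - n) - D ^ (2 - n) - c / 2 * (α * β) / D ^ n ≥
      -(2 * c * A * B / D ^ 2) * D ^ (2 - n) := by
  have hD : 0 < D := hd.trans_le hdD
  have hinv : D ^ (2 - n) ≤ d ^ (2 - n) := by
    rw [show 2 - n = -(n - 2) by ring, zpow_neg, zpow_neg]
    exact inv_anti₀ (zpow_pos hd _) (zpow_le_zpow_left₀ (by omega) hd.le hdD)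
  have hαβ : α * β ≤ 4 * (A * B) := by nlinarith
  have hrhs : 2 * c * A * B / D ^ 2 * D ^ (2 - n) = 2 * c * A * B / D ^ n := by
    rw [div_mul_eq_mul_div, div_eq_div_iff (by positivity) (by positivity), mul_assoc,
      ← zpow_natCast, ← zpow_add₀ hD.ne']
    ring_nf
  have hterm : c / 2 * (α * β) / D ^ n ≤ 2 * c * A * B / D ^ 2 * D ^ (2 - n) := by
    rw [hrhs]
    exact div_le_div_of_nonneg_right (by nlinarith) (by positivity)
  linarith

theorem stmt_17 (n : ℕ) (hn : 3 ≤ n) (x z : EuclideanSpace ℝ (Fin n))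
    (hx0 : 0 < ‖x‖) (hx1 : ‖x‖ ≤ 1) (hz : ‖z‖ < 1) (hxz : x ≠ z) :
    0 ≤ 2 * ((n : ℝ) - 2) *
          ⟪‖x‖⁻¹ • x, ‖x‖⁻¹ • x - z⟫ * ⟪‖x‖⁻¹ • x, ‖x‖⁻¹ • x - ‖x‖ • z⟫ /
            ‖‖x‖⁻¹ • x - ‖x‖ • z‖ ^ 2 ∧
      ‖x - z‖ ^ (2 - (n : ℤ)) - ‖‖x‖⁻¹ • x - ‖x‖ • z‖ ^ (2 - (n : ℤ)) -
          ((n : ℝ) - 2) / 2 * ((1 - ‖z‖ ^ 2) * (1 - ‖x‖ ^ 2 * ‖z‖ ^ 2)) /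
            ‖‖x‖⁻¹ • x - ‖x‖ • z‖ ^ (n : ℤ) ≥
        -(2 * ((n : ℝ) - 2) *
            ⟪‖x‖⁻¹ • x, ‖x‖⁻¹ • x - z⟫ * ⟪‖x‖⁻¹ • x, ‖x‖⁻¹ • x - ‖x‖ • z⟫ /
              ‖‖x‖⁻¹ • x - ‖x‖ • z‖ ^ 2) *
          ‖‖x‖⁻¹ • x - ‖x‖ • z‖ ^ (2 - (n : ℤ)) := by
  set r := ‖x‖
  set u := r⁻¹ • x
  have hu : ‖u‖ = 1 := by rw [norm_smul, norm_inv, norm_norm, inv_mul_cancel₀ hx0.ne']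
  have hx : x = r • u := by rw [smul_smul, mul_inv_cancel₀ hx0.ne', one_smul]
  have hrz : r * ‖z‖ < 1 := by nlinarith [norm_nonneg z]
  have hA := inner_sub_pos_of_norm_lt_one hu hz
  have hB := inner_sub_pos_of_norm_lt_one hu (w := r • z) (by rwa [norm_smul, norm_norm])
  have hc : (0 : ℝ) ≤ n - 2 := by
    have : (3 : ℝ) ≤ n := by exact_mod_cast hn
    linarith
  refine ⟨div_nonneg (mul_nonneg (mul_nonneg (by linarith) hA.le) hB.le) (sq_nonneg _), ?_⟩
  have hdD : ‖x - z‖ ≤ ‖u - r • z‖ :=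
    hx ▸ norm_smul_sub_le_norm_sub_smul hu (by rwa [abs_norm]) hz.le
  have hβ := one_sub_norm_sq_le_two_inner_sub hu (r • z)
  rw [norm_smul, norm_norm, mul_pow] at hβ
  exact zpow_two_sub_sub_zpow_two_sub_sub_div_zpow_ge (by omega) hc
    (norm_pos_iff.2 (sub_ne_zero.2 hxz)) hdD (one_sub_norm_sq_le_two_inner_sub hu z) hβ
    (by nlinarith [mul_nonneg hx0.le (norm_nonneg z)]) hA.le
end
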